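/- Assume λ is a regular cardinal that is either θ-inaccessible or equal to θ^{+n} for some 1 ≤ n < ω, D is a transitive θ-covering matrix on λ, and S(D) holds. Then there is an unbounded set A ⊆ λ such that every Z ∈ [A]^{<λ} is contained in some entry D(i,β) of D. -/

import Mathlib

open Cardinal Set

/-- `C` is a club (closed and unbounded) subset of the ordinal `lam`. -/
def IsClubIn (C : Set Ordinal.{0}) (lam : Ordinal.{0}) : Prop :=
  (∀ γ ∈ C, γ < lam) ∧ (∀ α < lam, ∃ β ∈ C, α < β) ∧
    (∀ δ, δ < lam → δ ≠ 0 → (∀ α < δ, ∃ β ∈ C, α < β ∧ β < δ) → δ ∈ C)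

/-- `S` is a stationary subset of the ordinal `lam`. -/
def IsStationaryIn (S : Set Ordinal.{0}) (lam : Ordinal.{0}) : Prop :=
  (∀ γ ∈ S, γ < lam) ∧ ∀ C, IsClubIn C lam → (S ∩ C).Nonempty
/-- `D` is a `θ`-covering matrix on `lam` (`θ`, `lam` ordinals, typically `θ = θc.ord`
for a regular cardinal `θc`): entries `D i β` for `i < θ`, `β < lam` union up to `β`,
are monotone in `i`, and are directed under end-coverage. -/
def IsCovMatrix (θ lam : Ordinal.{0}) (D : Ordinal.{0} → Ordinal.{0} → Set Ordinal.{0}) : Prop :=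
  (∀ β < lam, (⋃ i ∈ Set.Iio θ, D i β) = Set.Iio β) ∧
  (∀ i j, i ≤ j → j < θ → ∀ β < lam, D i β ⊆ D j β) ∧
  (∀ β γ, β < γ → γ < lam → ∀ i < θ, ∃ j < θ, D i β ⊆ D j γ)

/-- `D` is uniform: each `D i β` contains a club in `β` for eventually all `i < θ`. -/
def IsUniformMatrix (θ lam : Ordinal.{0}) (D : Ordinal.{0} → Ordinal.{0} → Set Ordinal.{0}) : Prop :=
  ∀ β < lam, ∃ i₀ < θ, ∀ i, i₀ ≤ i → i < θ → ∃ C, IsClubIn C β ∧ C ⊆ D i β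

/-- `D` is transitive: `α ∈ D i β` implies `D i α ⊆ D i β`. -/
def IsTransMatrix (θ lam : Ordinal.{0}) (D : Ordinal.{0} → Ordinal.{0} → Set Ordinal.{0}) : Prop :=
  ∀ i < θ, ∀ β < lam, ∀ α ∈ D i β, D i α ⊆ D i β

/-- `D` is closed: each entry is closed under suprema of its subsets of size `≤ θ`. -/
def IsClosedMatrix (θ : Cardinal.{0}) (lam : Ordinal.{0})
    (D : Ordinal.{0} → Ordinal.{0} → Set Ordinal.{0}) : Prop :=
  ∀ i < θ.ord, ∀ β < lam, ∀ X ⊆ D i β, X.Nonempty → #X ≤ Cardinal.lift.{1} θ →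
    sSup X ∈ D i β

/-- `S(D)`: there is a stationary `S ⊆ lam` such that every `θ`-indexed family of
stationary subsets of `S` meets a single entry of the matrix `D`. -/
def MatrixS (θ : Cardinal.{0}) (lam : Ordinal.{0})
    (D : Ordinal.{0} → Ordinal.{0} → Set Ordinal.{0}) : Prop :=
  ∃ S, IsStationaryIn S lam ∧ ∀ Ss : Ordinal.{0} → Set Ordinal.{0},
    (∀ i < θ.ord, Ss i ⊆ S ∧ IsStationaryIn (Ss i) lam) →
    ∃ j < θ.ord, ∃ β < lam, ∀ i < θ.ord, (Ss i ∩ D j β).Nonempty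

/-- `CP(D)`: there is an unbounded `A ⊆ lam` such that every subset of `A` of size `θ`
is contained in a single entry of `D`. -/
def MatrixCP (θ : Cardinal.{0}) (lam : Ordinal.{0})
    (D : Ordinal.{0} → Ordinal.{0} → Set Ordinal.{0}) : Prop :=
  ∃ A : Set Ordinal.{0}, A ⊆ Set.Iio lam ∧ (∀ α < lam, ∃ β ∈ A, α < β) ∧
    ∀ Z ⊆ A, #Z = Cardinal.lift.{1} θ → ∃ i < θ.ord, ∃ β < lam, Z ⊆ D i β


/-!
Fix a stationary `S` witnessing `S(D)`. For `γ < λ`, the sets `{α ∈ S | γ ∈ D(j, α)}`, `j < θ`,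
cover a tail of `S`, so one of them is stationary; a single row `j₀` works for unboundedly many
`γ`, and these `γ` form `A`. For `Z ⊆ A` with `|Z| ≤ θ`, `S(D)` applied to the stationary sets
attached to the points of `Z` gives `α`'s lying in one entry `D(j, β)`, and transitivity puts `Z`
inside `D(max j₀ j, β)`.

Larger `Z` are handled by moving the covers of fewer than `λ` smaller subsets into a common column
`β < λ`. If `λ` is `θ`-inaccessible, there are `|Z|^θ < λ` many `θ`-sequences in `Z`; were `Z`
not inside any `D(j, β)`, the sequence of points escaping the `D(j, β)` would itself lie in one of
them. If `λ = θ⁺ⁿ`, one climbs through the regular cardinals `θ⁺ᵏ`: for regular `κ < λ`, list `Z`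
in type `κ`, cover its initial segments, and pigeonhole their `< κ` many rows.
-/

theorem Cardinal.IsRegular.exists_forall_lt {c : Cardinal.{u}} (hc : c.IsRegular) {ι : Type v}
    (hι : Cardinal.lift.{u} #ι < Cardinal.lift.{v} c) {f : ι → Ordinal.{u}}
    (hf : ∀ i, f i < c.ord) : ∃ β < c.ord, ∀ i, f i < β := by
  have hsup : ⨆ i, f i + 1 < c.ord := by
    refine Ordinal.lift_iSup_add_one_lt_of_lt_cof ?_ hf
    rwa [← Ordinal.lift_cof, hc.cof_ord]
  have hbdd : BddAbove (range fun i => f i + 1) :=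
    ⟨c.ord, by rintro _ ⟨i, rfl⟩; exact Order.add_one_le_of_lt (hf i)⟩
  exact ⟨_, hsup, fun i => (Order.lt_add_one_iff.2 le_rfl).trans_le (le_ciSup hbdd i)⟩

theorem Cardinal.IsRegular.exists_unbounded_fiber {c t : Cardinal.{u}} (hc : c.IsRegular)
    (ht : t < c) (f : Iio c.ord → Ordinal.{u}) (hf : ∀ x, f x < t.ord) :
    ∃ j < t.ord, ∀ α : Iio c.ord, ∃ x, α < x ∧ f x = j := by
  by_contra! h
  choose g hg using h
  obtain ⟨β, hβ, hgβ⟩ := hc.exists_forall_lt (ι := Iio t.ord) (f := fun j => (g j.1 j.2).1)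
    (by simpa [Cardinal.mk_Iio_ordinal] using ht) fun j => (g j.1 j.2).2
  exact hg _ (hf ⟨β, hβ⟩) ⟨β, hβ⟩ (hgβ ⟨_, hf _⟩) rfl

namespace IsClubIn

variable {C : Set Ordinal.{0}} {o : Ordinal.{0}}

theorem isClub_preimage (hC : IsClubIn C o) : IsClub {x : Iio o | x.1 ∈ C} := by
  refine ⟨fun d hdC ⟨y, hy⟩ _ a ha => ?_, fun x => ?_⟩
  · by_cases had : a ∈ d
    · exact hdC had
    have hlt : ∀ z ∈ d, z.1 < a.1 := fun z hz => (ha.1 hz).lt_of_ne (ne_of_mem_of_not_mem hz had)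
    refine hC.2.2 a.1 a.2 (hlt y hy).ne_bot fun α hα => ?_
    by_contra! hbound
    have hub : ⟨α, hα.trans a.2⟩ ∈ upperBounds d := fun z hz =>
      not_lt.1 fun hαz => (hbound z (hdC hz) hαz).not_gt (hlt z hz)
    exact (ha.2 hub).not_gt hα
  · obtain ⟨β, hβC, hxβ⟩ := hC.2.1 x.1 x.2
    exact ⟨⟨β, hC.1 β hβC⟩, hβC, hxβ.le⟩

theorem of_isClub (ho : Order.IsSuccLimit o) {t : Set (Iio o)} (ht : IsClub t) :
    IsClubIn (Subtype.val '' t) o := by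
  refine ⟨fun _ ⟨x, _, hx⟩ => hx ▸ x.2, fun α hα => ?_, fun δ hδ hδ0 happ => ?_⟩
  · obtain ⟨y, hyt, hy⟩ := ht.isCofinal ⟨Order.succ α, ho.succ_lt hα⟩
    exact ⟨y.1, ⟨y, hyt, rfl⟩, (Order.lt_succ α).trans_le hy⟩
  · have hlub : IsLUB {y ∈ t | y.1 < δ} ⟨δ, hδ⟩ := by
      refine ⟨fun y hy => hy.2.le, fun b hb => not_lt.1 fun hbδ => ?_⟩
      obtain ⟨_, ⟨y, hyt, rfl⟩, hby, hyδ⟩ := happ b.1 hbδ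
      exact (hb ⟨hyt, hyδ⟩).not_gt hby
    obtain ⟨_, ⟨y, hyt, rfl⟩, -, hyδ⟩ := happ 0 (pos_iff_ne_zero.2 hδ0)
    have hne : {y ∈ t | y.1 < δ}.Nonempty := ⟨y, hyt, hyδ⟩
    exact ⟨⟨δ, hδ⟩, ht.isLUB_mem (fun _ h => h.1) hne hlub, rfl⟩

theorem inter_Ioi {γ : Ordinal.{0}} (hC : IsClubIn C o) (hγ : γ < o) :
    IsClubIn (C ∩ Ioi γ) o := by
  refine ⟨fun x hx => hC.1 x hx.1, fun α hα => ?_, fun δ hδ hδ0 happ => ⟨?_, ?_⟩⟩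
  · obtain ⟨β, hβC, hβ⟩ := hC.2.1 (max α γ) (max_lt hα hγ)
    exact ⟨β, ⟨hβC, (le_max_right α γ).trans_lt hβ⟩, (le_max_left α γ).trans_lt hβ⟩
  · refine hC.2.2 δ hδ hδ0 fun α hα => ?_
    obtain ⟨β, hβ, hαβ, hβδ⟩ := happ α hα
    exact ⟨β, hβ.1, hαβ, hβδ⟩
  · obtain ⟨β, hβ, -, hβδ⟩ := happ 0 (pos_iff_ne_zero.2 hδ0)
    exact hβ.2.trans hβδ

end IsClubIn

theorem isStationaryIn_iff_isStationary {S : Set Ordinal.{0}} {o : Ordinal.{0}}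
    (ho : Order.IsSuccLimit o) :
    IsStationaryIn S o ↔ (∀ γ ∈ S, γ < o) ∧ IsStationary {x : Iio o | x.1 ∈ S} := by
  refine and_congr_right fun _ => ⟨fun h t ht => ?_, fun h C hC => ?_⟩
  · obtain ⟨_, hxS, x, hxt, rfl⟩ := h _ (IsClubIn.of_isClub ho ht)
    exact ⟨x, hxS, hxt⟩
  · obtain ⟨x, hxS, hxC⟩ := h hC.isClub_preimage
    exact ⟨x.1, hxS, hxC⟩

theorem IsStationaryIn.inter_Ioi {S : Set Ordinal.{0}} {o γ : Ordinal.{0}}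
    (hS : IsStationaryIn S o) (hγ : γ < o) : IsStationaryIn (S ∩ Ioi γ) o := by
  refine ⟨fun x hx => hS.1 x hx.1, fun C hC => ?_⟩
  obtain ⟨x, hxS, hxC, hxγ⟩ := hS.2 _ (hC.inter_Ioi hγ)
  exact ⟨x, ⟨hxS, hxγ⟩, hxC⟩

theorem IsStationaryIn.mono {S T : Set Ordinal.{0}} {o : Ordinal.{0}} (hS : IsStationaryIn S o)
    (hST : S ⊆ T) (hT : ∀ γ ∈ T, γ < o) : IsStationaryIn T o :=
  ⟨hT, fun C hC => (hS.2 C hC).mono (inter_subset_inter_left C hST)⟩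

theorem IsStationaryIn.exists_isStationaryIn_inter {c t : Cardinal.{0}} (hc : c.IsRegular)
    (hω : ℵ₀ < c) (ht : t < c) {S : Set Ordinal.{0}} (hS : IsStationaryIn S c.ord)
    {T : Ordinal.{0} → Set Ordinal.{0}} (hcov : S ⊆ ⋃ j ∈ Iio t.ord, T j) :
    ∃ j < t.ord, IsStationaryIn (S ∩ T j) c.ord := by
  have hlim := Cardinal.isSuccLimit_ord hc.aleph0_le
  have hcof : Order.cof (Iio c.ord) = Cardinal.lift.{1} c := by
    rw [Ordinal.cof_Iio, ← Ordinal.lift_cof, hc.cof_ord]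
  rw [isStationaryIn_iff_isStationary hlim] at hS
  have hunion : IsStationary (⋃ j : Iio t.ord, {x : Iio c.ord | x.1 ∈ S ∩ T j}) := by
    refine hS.2.mono fun x hx => ?_
    obtain ⟨j, hj, hxT⟩ := mem_iUnion₂.1 (hcov hx)
    exact mem_iUnion.2 ⟨⟨j, hj⟩, hx, hxT⟩
  rw [isStationary_iUnion_iff (by rw [hcof]; simpa using hω.ne')
    (by simpa [hcof, Cardinal.mk_Iio_ordinal] using ht)] at hunion
  obtain ⟨⟨j, hj⟩, hjS⟩ := hunion
  exact ⟨j, hj, (isStationaryIn_iff_isStationary hlim).2 ⟨fun γ hγ => hS.1 γ hγ.1, hjS⟩⟩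

def IsCoveredBy (θ lam : Ordinal.{0}) (D : Ordinal.{0} → Ordinal.{0} → Set Ordinal.{0})
    (Z : Set Ordinal.{0}) : Prop :=
  ∃ i < θ, ∃ β < lam, Z ⊆ D i β

section Matrix

variable {θ lam : Ordinal.{0}} {D : Ordinal.{0} → Ordinal.{0} → Set Ordinal.{0}}

theorem IsCovMatrix.exists_mem (hmat : IsCovMatrix θ lam D) {γ β : Ordinal.{0}} (hβ : β < lam)
    (hγ : γ < β) : ∃ i < θ, γ ∈ D i β := by
  rw [← mem_Iio, ← hmat.1 β hβ] at hγ
  simpa using hγ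

theorem IsTransMatrix.mem_max (hmat : IsCovMatrix θ lam D) (htrans : IsTransMatrix θ lam D)
    {i j α β γ : Ordinal.{0}} (hi : i < θ) (hj : j < θ) (hα : α < lam) (hβ : β < lam)
    (hγα : γ ∈ D i α) (hαβ : α ∈ D j β) : γ ∈ D (max i j) β :=
  htrans _ (max_lt hi hj) β hβ α (hmat.2.1 j _ (le_max_right i j) (max_lt hi hj) β hβ hαβ)
    (hmat.2.1 i _ (le_max_left i j) (max_lt hi hj) α hα hγα)

theorem IsCovMatrix.exists_common_column {lam : Cardinal.{0}} (hlam : lam.IsRegular)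
    (hmat : IsCovMatrix θ lam.ord D) {ι : Type 1} (hι : #ι < Cardinal.lift.{1} lam)
    {Z : ι → Set Ordinal.{0}} (hZ : ∀ t, IsCoveredBy θ lam.ord D (Z t)) :
    ∃ β < lam.ord, ∀ t, ∃ j < θ, Z t ⊆ D j β := by
  choose i hi b hb hZb using hZ
  obtain ⟨β, hβ, hbβ⟩ := hlam.exists_forall_lt (by simpa using hι) hb
  refine ⟨β, hβ, fun t => ?_⟩
  obtain ⟨j, hj, hsub⟩ := hmat.2.2 (b t) β (hbβ t) hβ (i t) (hi t)
  exact ⟨j, hj, (hZb t).trans hsub⟩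

end Matrix

theorem exists_entry_meets_of_mk_le {θ : Cardinal.{0}} {lam : Ordinal.{0}}
    {D : Ordinal.{0} → Ordinal.{0} → Set Ordinal.{0}} {S : Set Ordinal.{0}}
    (hS : IsStationaryIn S lam)
    (hSD : ∀ Ss : Ordinal.{0} → Set Ordinal.{0},
      (∀ i < θ.ord, Ss i ⊆ S ∧ IsStationaryIn (Ss i) lam) →
      ∃ j < θ.ord, ∃ β < lam, ∀ i < θ.ord, (Ss i ∩ D j β).Nonempty)
    {ι : Type 1} (hι : #ι ≤ Cardinal.lift.{1} θ) {Ss : ι → Set Ordinal.{0}}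
    (hSs : ∀ t, Ss t ⊆ S ∧ IsStationaryIn (Ss t) lam) :
    ∃ j < θ.ord, ∃ β < lam, ∀ t, (Ss t ∩ D j β).Nonempty := by
  cases isEmpty_or_nonempty ι with
  | inl =>
    obtain ⟨j, hj, β, hβ, -⟩ := hSD (fun _ => S) fun _ _ => ⟨subset_rfl, hS⟩
    exact ⟨j, hj, β, hβ, isEmptyElim⟩
  | inr =>
    obtain ⟨e⟩ : Nonempty (ι ↪ Iio θ.ord) := by
      rwa [← Cardinal.le_def, Cardinal.mk_Iio_ordinal, Cardinal.card_ord]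
    have he : Function.Injective fun t => (e t).1 := Subtype.val_injective.comp e.injective
    obtain ⟨j, hj, β, hβ, hmeet⟩ := hSD (fun i => Ss (Function.invFun (fun t => (e t).1) i))
      fun i _ => hSs _
    refine ⟨j, hj, β, hβ, fun t => ?_⟩
    simpa [Function.leftInverse_invFun he t] using hmeet (e t).1 (e t).2

theorem exists_unbounded_covered_of_card_le {θ lam : Cardinal.{0}} (hθ : θ.IsRegular)
    (hlam : lam.IsRegular) (hθlam : θ < lam) {D : Ordinal.{0} → Ordinal.{0} → Set Ordinal.{0}}
    (hmat : IsCovMatrix θ.ord lam.ord D) (htrans : IsTransMatrix θ.ord lam.ord D)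
    (hS : MatrixS θ lam.ord D) :
    ∃ A ⊆ Iio lam.ord, (∀ α < lam.ord, ∃ β ∈ A, α < β) ∧
      ∀ Z ⊆ A, #Z ≤ Cardinal.lift.{1} θ → IsCoveredBy θ.ord lam.ord D Z := by
  obtain ⟨S, hSst, hSD⟩ := hS
  let T (γ j : Ordinal.{0}) : Set Ordinal.{0} := S ∩ {α | γ ∈ D j α}
  have hT : ∀ γ < lam.ord, ∃ j < θ.ord, IsStationaryIn (T γ j) lam.ord := by
    intro γ hγ
    obtain ⟨j, hj, hst⟩ := (hSst.inter_Ioi hγ).exists_isStationaryIn_inter hlam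
      (hθ.aleph0_le.trans_lt hθlam) hθlam (T := fun j => {α | γ ∈ D j α})
      fun α ⟨hαS, hγα⟩ => by simpa using hmat.exists_mem (hSst.1 α hαS) hγα
    exact ⟨j, hj, hst.mono (fun α hα => ⟨hα.1.1, hα.2⟩) fun α hα => hSst.1 α hα.1⟩
  choose! jf hjf hjT using hT
  obtain ⟨j₀, hj₀, hfib⟩ := hlam.exists_unbounded_fiber hθlam (fun γ => jf γ.1) fun γ => hjf γ.1 γ.2
  refine ⟨{γ | γ < lam.ord ∧ IsStationaryIn (T γ j₀) lam.ord}, fun γ hγ => hγ.1,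
    fun α hα => ?_, fun Z hZA hZ => ?_⟩
  · obtain ⟨⟨x, hx⟩, hαx, hjx⟩ := hfib ⟨α, hα⟩
    exact ⟨x, ⟨hx, hjx ▸ hjT x hx⟩, hαx⟩
  · obtain ⟨j, hj, β, hβ, hmeet⟩ := exists_entry_meets_of_mk_le hSst hSD (by simpa using hZ)
      (Ss := fun z : Z => T z j₀) fun z => ⟨inter_subset_left, (hZA z.2).2⟩
    refine ⟨max j₀ j, max_lt hj₀ hj, β, hβ, fun z hz => ?_⟩
    obtain ⟨α, ⟨hαS, hzα⟩, hαβ⟩ := hmeet ⟨z, hz⟩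
    exact htrans.mem_max hmat hj₀ hj (hSst.1 α hαS) hβ hzα hαβ

section Extension

variable {θ lam : Cardinal.{0}} {D : Ordinal.{0} → Ordinal.{0} → Set Ordinal.{0}}
  {A : Set Ordinal.{0}}

theorem covered_of_card_le_of_isRegular {κ : Cardinal.{0}} (hlam : lam.IsRegular)
    (hκ : κ.IsRegular) (hθκ : θ < κ) (hκlam : κ < lam) (hmat : IsCovMatrix θ.ord lam.ord D)
    (H : ∀ Z ⊆ A, #Z < Cardinal.lift.{1} κ → IsCoveredBy θ.ord lam.ord D Z) :
    ∀ Z ⊆ A, #Z ≤ Cardinal.lift.{1} κ → IsCoveredBy θ.ord lam.ord D Z := by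
  intro Z hZA hZ
  obtain ⟨g⟩ : Nonempty (Z ↪ Iio κ.ord) := by
    rwa [← Cardinal.le_def, Cardinal.mk_Iio_ordinal, Cardinal.card_ord]
  let Zξ (ξ : Iio κ.ord) : Set Ordinal.{0} := Subtype.val '' {z : Z | g z < ξ}
  have hZξ : ∀ ξ, IsCoveredBy θ.ord lam.ord D (Zξ ξ) := by
    intro ξ
    refine H _ (image_subset_iff.2 fun z _ => hZA z.2) (Cardinal.mk_image_le.trans_lt ?_)
    have hinj : Function.Injective fun z : {z : Z | g z < ξ} => (⟨(g z).1, z.2⟩ : Iio ξ.1) :=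
      fun _ _ h => Subtype.ext (g.injective (Subtype.ext (Subtype.mk.inj h)))
    refine (Cardinal.mk_le_of_injective hinj).trans_lt ?_
    rw [Cardinal.mk_Iio_ordinal, Cardinal.lift_lt, ← Cardinal.lt_ord]
    exact ξ.2
  obtain ⟨β, hβ, hcol⟩ := hmat.exists_common_column hlam
    (by simpa [Cardinal.mk_Iio_ordinal] using hκlam) hZξ
  choose jf hjf hsub using hcol
  obtain ⟨j, hj, hfib⟩ := hκ.exists_unbounded_fiber hθκ jf hjf
  refine ⟨j, hj, β, hβ, fun z hz => ?_⟩
  obtain ⟨ξ, hgξ, rfl⟩ := hfib (g ⟨z, hz⟩)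
  exact hsub ξ ⟨⟨z, hz⟩, hgξ, rfl⟩

theorem covered_of_card_lt_of_pow_lt (hlam : lam.IsRegular) (hpow : ∀ ζ < lam, ζ ^ θ < lam)
    (hmat : IsCovMatrix θ.ord lam.ord D)
    (H : ∀ Z ⊆ A, #Z ≤ Cardinal.lift.{1} θ → IsCoveredBy θ.ord lam.ord D Z) :
    ∀ Z ⊆ A, #Z < Cardinal.lift.{1} lam → IsCoveredBy θ.ord lam.ord D Z := by
  intro Z hZA hZ
  obtain ⟨μ, hμ, hμZ⟩ := Cardinal.lt_lift_iff.1 hZ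
  have hι : #(Iio θ.ord → Z) < Cardinal.lift.{1} lam := by
    rw [← Cardinal.power_def, ← hμZ, Cardinal.mk_Iio_ordinal, Cardinal.card_ord,
      ← Cardinal.lift_power, Cardinal.lift_lt]
    exact hpow μ hμ
  obtain ⟨β, hβ, hcol⟩ := hmat.exists_common_column hlam hι (Z := fun f => range (Subtype.val ∘ f))
    fun f => H _ (range_subset_iff.2 fun i => hZA (f i).2)
      (Cardinal.mk_range_le.trans (by simp [Cardinal.mk_Iio_ordinal]))
  by_contra hZβ
  have hesc : ∀ j : Iio θ.ord, ∃ z : Z, z.1 ∉ D j β := fun j => by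
    by_contra! h
    exact hZβ ⟨j, j.2, β, hβ, fun z hz => h ⟨z, hz⟩⟩
  choose esc hesc using hesc
  obtain ⟨j, hj, hsub⟩ := hcol esc
  exact hesc ⟨j, hj⟩ (hsub ⟨⟨j, hj⟩, rfl⟩)

theorem covered_of_card_le_iterate_succ (hθ : ℵ₀ ≤ θ) (hlam : lam.IsRegular)
    (hmat : IsCovMatrix θ.ord lam.ord D)
    (H : ∀ Z ⊆ A, #Z ≤ Cardinal.lift.{1} θ → IsCoveredBy θ.ord lam.ord D Z) (k : ℕ)
    (hk : Order.succ^[k] θ < lam) :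
    ∀ Z ⊆ A, #Z ≤ Cardinal.lift.{1} (Order.succ^[k] θ) → IsCoveredBy θ.ord lam.ord D Z := by
  induction k with
  | zero => exact H
  | succ k ih =>
    rw [Function.iterate_succ_apply'] at hk ⊢
    have hθμ : θ ≤ Order.succ^[k] θ := Order.le_succ_iterate k θ
    refine covered_of_card_le_of_isRegular hlam (Cardinal.isRegular_succ (hθ.trans hθμ))
      (Order.lt_succ_of_le hθμ) hk hmat fun Z hZA hZ => ih ((Order.lt_succ _).trans hk) Z hZA ?_
    rwa [Cardinal.lift_succ, Order.lt_succ_iff] at hZ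

end Extension

/-- If `lam` is regular and either `θ`-inaccessible or `θ⁺ⁿ` for some `1 ≤ n`, `D` is a
transitive `θ`-covering matrix on `lam` and `S(D)` holds, then there is an unbounded
`A ⊆ lam` with `[A]^{<lam}` covered by `D`. -/
theorem unbounded_small_subsets_covered (θ lam : Cardinal.{0})
    (hθ : θ.IsRegular) (hlam : lam.IsRegular) (hθlam : θ < lam)
    (hcase : (∀ ζ < lam, ζ ^ θ < lam) ∨ (∃ n : ℕ, 1 ≤ n ∧ lam = (Order.succ)^[n] θ))
    (D : Ordinal.{0} → Ordinal.{0} → Set Ordinal.{0})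
    (hmat : IsCovMatrix θ.ord lam.ord D)
    (htrans : IsTransMatrix θ.ord lam.ord D)
    (hS : MatrixS θ lam.ord D) :
    ∃ A : Set Ordinal.{0}, A ⊆ Set.Iio lam.ord ∧ (∀ α < lam.ord, ∃ β ∈ A, α < β) ∧
      ∀ Z ⊆ A, #Z < Cardinal.lift.{1} lam → ∃ i < θ.ord, ∃ β < lam.ord, Z ⊆ D i β := by
  obtain ⟨A, hAlam, hAunb, hA⟩ :=
    exists_unbounded_covered_of_card_le hθ hlam hθlam hmat htrans hS
  refine ⟨A, hAlam, hAunb, ?_⟩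
  rcases hcase with hpow | ⟨n, hn, rfl⟩
  · exact covered_of_card_lt_of_pow_lt hlam hpow hmat hA
  · obtain ⟨k, rfl⟩ := Nat.exists_eq_add_of_le' hn
    intro Z hZA hZ
    rw [Function.iterate_succ_apply', Cardinal.lift_succ, Order.lt_succ_iff] at hZ
    have hk : Order.succ^[k] θ < Order.succ^[k + 1] θ := by
      rw [Function.iterate_succ_apply']
      exact Order.lt_succ _
    exact covered_of_card_le_iterate_succ hθ.aleph0_le hlam hmat hA k hk Z hZA hZ
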